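/- arXiv:2302.08529 — 2 statements merged into one kernel-verified Lean document; each statement's English description precedes it below -/
import Mathlib

section
/- Quantum speed limit of gradients: Let H_R, H^{(m)}, H_L, O be Hermitian matrices, ρ₀ a density matrix, and define A(t₁,t₂) = i·Tr(e^{−iH_R t₁} ρ₀ e^{iH_R t₁} [H^{(m)}, e^{iH_L t₂} O e^{−iH_L t₂}]). Set K = max(‖H_R‖, ‖H^{(m)}‖) and C = max(‖[H^{(m)},O]‖, ‖[H_L,O]‖), and assume A(0,0) ≠ 0 and K, C > 0. Then for all t_R, t_L ≥ 0 with t_R + t_L ≤ |A(0,0)|/(4KC), we have |A(t_R, t_L)| ≥ |A(0,0)|/2. -/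
/-!
Move to the Heisenberg picture: `A(t₁, t₂) = i Tr(ρ₀ X(t₁, t₂))` with
`X(t₁, t₂) = e^{i H_R t₁} [H^{(m)}, e^{i H_L t₂} O e^{-i H_L t₂}] e^{-i H_R t₁}`, so that
`|A(t₁, t₂) - A(0, 0)| ≤ ‖X(t₁, t₂) - X(0, 0)‖` because `ρ₀` is a state. Conjugation by
`e^{i H t}` is an isometry whose velocity is the conjugate of `i [H, X]`, so it moves `X` by at
most `|t| ‖[H, X]‖`. Applying this to `H_L` inside the commutator and to `H_R` outside gives
`‖X(t_R, t_L) - X(0, 0)‖ ≤ 2 K C (t_R + t_L)`, which is at most `|A(0, 0)| / 2` in the stated range.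
-/

open Matrix NormedSpace
open scoped Matrix.Norms.L2Operator ComplexOrder

open Complex

lemma norm_mul_sub_mul_le {R : Type*} [NonUnitalNormedRing R] (a b : R) :
    ‖a * b - b * a‖ ≤ 2 * ‖a‖ * ‖b‖ :=
  calc ‖a * b - b * a‖ ≤ ‖a‖ * ‖b‖ + ‖b‖ * ‖a‖ :=
        (norm_sub_le _ _).trans (add_le_add (norm_mul_le _ _) (norm_mul_le _ _))
    _ = 2 * ‖a‖ * ‖b‖ := by ring

section CStarAlgebra

variable {𝔸 : Type*} [CStarAlgebra 𝔸] {H : 𝔸}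

noncomputable def heisenbergEvolution (H : 𝔸) (t : ℝ) (X : 𝔸) : 𝔸 :=
  exp ((I * t) • H) * X * exp ((-(I * t)) • H)

@[simp]
lemma heisenbergEvolution_zero (H X : 𝔸) : heisenbergEvolution H 0 X = X := by
  simp [heisenbergEvolution]

lemma heisenbergEvolution_sub (H : 𝔸) (t : ℝ) (X Y : 𝔸) :
    heisenbergEvolution H t (X - Y) = heisenbergEvolution H t X - heisenbergEvolution H t Y := by
  simp only [heisenbergEvolution, mul_sub, sub_mul]

lemma star_exp_I_mul_smul_of_isSelfAdjoint (hH : IsSelfAdjoint H) (t : ℝ) :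
    star (exp ((I * t) • H)) = exp ((-(I * t)) • H) := by
  rw [star_exp, star_smul, hH.star_eq, star_mul', star_def, conj_I, conj_ofReal, neg_mul]

lemma exp_I_mul_smul_mem_unitary (hH : IsSelfAdjoint H) (t : ℝ) :
    exp ((I * t) • H) ∈ unitary 𝔸 :=
  letI : NormedAlgebra ℚ 𝔸 := .restrictScalars ℚ ℂ 𝔸
  exp_mem_unitary_of_mem_skewAdjoint <| hH.smul_mem_skewAdjoint <| by
    rw [skewAdjoint.mem_iff, star_mul', star_def, conj_I, conj_ofReal, neg_mul]

lemma norm_heisenbergEvolution (hH : IsSelfAdjoint H) (t : ℝ) (X : 𝔸) :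
    ‖heisenbergEvolution H t X‖ = ‖X‖ := by
  have hU := exp_I_mul_smul_mem_unitary hH t
  have hV := Unitary.star_mem hU
  rw [star_exp_I_mul_smul_of_isSelfAdjoint hH] at hV
  rw [heisenbergEvolution, CStarRing.norm_mul_mem_unitary _ hV, CStarRing.norm_mem_unitary_mul _ hU]

lemma hasDerivAt_exp_mul_ofReal_smul (c : ℂ) (H : 𝔸) (s : ℝ) :
    HasDerivAt (fun u : ℝ => exp ((c * u) • H)) ((c • H) * exp ((c * s) • H)) s := by
  have := (hasDerivAt_exp_smul_const' (𝕂 := ℂ) (c • H) (s : ℂ)).scomp s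
    (hasDerivAt_id s).ofReal_comp
  simpa only [Function.comp_def, id, ofReal_one, one_smul, smul_smul, mul_comm] using this

lemma hasDerivAt_heisenbergEvolution (H X : 𝔸) (s : ℝ) :
    HasDerivAt (fun u : ℝ => heisenbergEvolution H u X)
      (heisenbergEvolution H s (I • (H * X - X * H))) s := by
  have hU := hasDerivAt_exp_mul_ofReal_smul I H s
  have hV := hasDerivAt_exp_mul_ofReal_smul (-I) H s
  simp only [neg_mul] at hV
  refine ((hU.mul_const X).fun_mul hV).congr_deriv ?_
  have hcomm : Commute (I • H) (exp ((I * s) • H)) :=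
    ((Commute.refl H).smul_left I |>.smul_right _).exp_right
  rw [heisenbergEvolution, hcomm.eq, neg_smul I H, smul_sub, ← smul_mul_assoc, ← mul_smul_comm]
  generalize I • H = Y
  noncomm_ring

lemma norm_heisenbergEvolution_sub_le (hH : IsSelfAdjoint H) (t : ℝ) (X : 𝔸) :
    ‖heisenbergEvolution H t X - X‖ ≤ |t| * ‖H * X - X * H‖ := by
  have hspeed (s : ℝ) : ‖heisenbergEvolution H s (I • (H * X - X * H))‖ = ‖H * X - X * H‖ := by
    rw [norm_heisenbergEvolution hH, norm_smul, norm_I, one_mul]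
  simpa [mul_comm] using convex_univ.norm_image_sub_le_of_norm_hasDerivWithin_le
    (fun s _ => (hasDerivAt_heisenbergEvolution H X s).hasDerivWithinAt)
    (fun s _ => (hspeed s).le) (Set.mem_univ 0) (Set.mem_univ t)

lemma norm_heisenbergEvolution_commutator_sub_le {HR HL : 𝔸} (hHR : IsSelfAdjoint HR)
    (hHL : IsSelfAdjoint HL) (Hm O : 𝔸) (t₁ t₂ : ℝ) :
    ‖heisenbergEvolution HR t₁
        (Hm * heisenbergEvolution HL t₂ O - heisenbergEvolution HL t₂ O * Hm)
      - (Hm * O - O * Hm)‖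
      ≤ 2 * ‖Hm‖ * (|t₂| * ‖HL * O - O * HL‖) + |t₁| * (2 * ‖HR‖ * ‖Hm * O - O * Hm‖) := by
  set Oₜ := heisenbergEvolution HL t₂ O
  set G := Hm * O - O * Hm with hG
  calc ‖heisenbergEvolution HR t₁ (Hm * Oₜ - Oₜ * Hm) - G‖
      ≤ ‖heisenbergEvolution HR t₁ (Hm * Oₜ - Oₜ * Hm - G)‖
          + ‖heisenbergEvolution HR t₁ G - G‖ := by
        rw [heisenbergEvolution_sub HR t₁ (Hm * Oₜ - Oₜ * Hm) G]
        exact norm_sub_le_norm_sub_add_norm_sub ..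
    _ = ‖Hm * (Oₜ - O) - (Oₜ - O) * Hm‖ + ‖heisenbergEvolution HR t₁ G - G‖ := by
        rw [norm_heisenbergEvolution hHR]
        congr 2
        rw [hG]
        noncomm_ring
    _ ≤ 2 * ‖Hm‖ * ‖Oₜ - O‖ + |t₁| * ‖HR * G - G * HR‖ :=
        add_le_add (norm_mul_sub_mul_le _ _) (norm_heisenbergEvolution_sub_le hHR _ _)
    _ ≤ 2 * ‖Hm‖ * (|t₂| * ‖HL * O - O * HL‖) + |t₁| * (2 * ‖HR‖ * ‖G‖) := by
        gcongr
        exacts [norm_heisenbergEvolution_sub_le hHL _ _, norm_mul_sub_mul_le _ _]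

end CStarAlgebra

namespace Matrix

variable {m : Type*} [Fintype m] [DecidableEq m]

lemma norm_entry_le_l2_opNorm (B : Matrix m m ℂ) (i j : m) : ‖B i j‖ ≤ ‖B‖ :=
  calc ‖B i j‖ = ‖(EuclideanSpace.equiv m ℂ).symm (B *ᵥ EuclideanSpace.single j 1) i‖ := by simp
    _ ≤ ‖(EuclideanSpace.equiv m ℂ).symm (B *ᵥ EuclideanSpace.single j 1)‖ :=
        PiLp.norm_apply_le _ i
    _ ≤ ‖B‖ := by simpa using B.l2_opNorm_mulVec (EuclideanSpace.single j 1)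

lemma PosSemidef.norm_trace_mul_le {ρ : Matrix m m ℂ} (hρ : ρ.PosSemidef) (M : Matrix m m ℂ) :
    ‖(ρ * M).trace‖ ≤ ‖ρ.trace‖ * ‖M‖ := by
  set U : unitary (Matrix m m ℂ) := hρ.1.eigenvectorUnitary
  set ev := hρ.1.eigenvalues
  set B := star (U : Matrix m m ℂ) * M * U
  have htrace : (ρ * M).trace = ∑ i, (ev i : ℂ) * B i i := by
    have hρU : ρ = U * diagonal (fun i => (ev i : ℂ)) * star (U : Matrix m m ℂ) :=
      hρ.1.spectral_theorem
    rw [hρU, mul_assoc, mul_assoc, trace_mul_comm, mul_assoc]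
    simp only [trace, diag, diagonal_mul]
    rfl
  have hB : ‖B‖ = ‖M‖ := by
    rw [CStarRing.norm_mul_mem_unitary _ U.2,
      CStarRing.norm_mem_unitary_mul _ (Unitary.star_mem U.2)]
  have hsum : ‖ρ.trace‖ = ∑ i, ev i := by
    rw [hρ.1.trace_eq_sum_eigenvalues, ← RCLike.ofReal_sum, RCLike.norm_ofReal,
      abs_of_nonneg (Finset.sum_nonneg fun i _ => hρ.eigenvalues_nonneg i)]
  calc ‖(ρ * M).trace‖ ≤ ∑ i, ev i * ‖M‖ := by
        rw [htrace]
        refine (norm_sum_le _ _).trans (Finset.sum_le_sum fun i _ => ?_)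
        rw [norm_mul, Complex.norm_real, Real.norm_of_nonneg (hρ.eigenvalues_nonneg i), ← hB]
        exact mul_le_mul_of_nonneg_left (norm_entry_le_l2_opNorm B i i) (hρ.eigenvalues_nonneg i)
    _ = ‖ρ.trace‖ * ‖M‖ := by rw [← Finset.sum_mul, hsum]

lemma PosSemidef.norm_trace_mul_sub_trace_mul_le {ρ : Matrix m m ℂ} (hρ : ρ.PosSemidef)
    (hρtr : ρ.trace = 1) (X Y : Matrix m m ℂ) :
    ‖(ρ * X).trace - (ρ * Y).trace‖ ≤ ‖X - Y‖ := by
  simpa [hρtr, ← trace_sub, ← Matrix.mul_sub] using hρ.norm_trace_mul_le (X - Y)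

lemma trace_mul_heisenbergEvolution (ρ H X : Matrix m m ℂ) (t : ℝ) :
    (ρ * heisenbergEvolution H t X).trace
      = (exp ((-(I * t)) • H) * ρ * exp ((I * t) • H) * X).trace := by
  simp only [heisenbergEvolution, ← mul_assoc]
  rw [trace_mul_comm]
  simp only [mul_assoc]

end Matrix

theorem quantum_speed_limit_of_gradients_general (n : ℕ) (HR Hm HL O ρ₀ : Matrix (Fin n) (Fin n) ℂ)
    (hHR : HR.IsHermitian) (hHL : HL.IsHermitian)
    (hρ : ρ₀.PosSemidef) (hρtr : ρ₀.trace = 1)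
    (A : ℝ → ℝ → ℂ)
    (hA : A = fun (t₁ t₂ : ℝ) =>
      Complex.I *
        (exp ((-(Complex.I * (t₁ : ℂ))) • HR) * ρ₀ * exp ((Complex.I * (t₁ : ℂ)) • HR) *
          (Hm * (exp ((Complex.I * (t₂ : ℂ)) • HL) * O * exp ((-(Complex.I * (t₂ : ℂ))) • HL))
            - (exp ((Complex.I * (t₂ : ℂ)) • HL) * O *
                exp ((-(Complex.I * (t₂ : ℂ))) • HL)) * Hm)).trace)
    (K C : ℝ) (hK : K = max ‖HR‖ ‖Hm‖) (hC : C = max ‖Hm * O - O * Hm‖ ‖HL * O - O * HL‖) :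
    ∀ tR tL : ℝ, 0 ≤ tR → 0 ≤ tL → tR + tL ≤ ‖A 0 0‖ / (4 * K * C) →
      ‖A tR tL‖ ≥ ‖A 0 0‖ / 2 := by
  intro tR tL htR htL ht
  have hA_heisenberg (t₁ t₂ : ℝ) : A t₁ t₂ = I * (ρ₀ * heisenbergEvolution HR t₁
      (Hm * heisenbergEvolution HL t₂ O - heisenbergEvolution HL t₂ O * Hm)).trace := by
    rw [trace_mul_heisenbergEvolution, hA]
    rfl
  have hHmK : ‖Hm‖ ≤ K := hK ▸ le_max_right _ _
  have hHRK : ‖HR‖ ≤ K := hK ▸ le_max_left _ _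
  have hHmOC : ‖Hm * O - O * Hm‖ ≤ C := hC ▸ le_max_left _ _
  have hHLOC : ‖HL * O - O * HL‖ ≤ C := hC ▸ le_max_right _ _
  have hK0 : 0 ≤ K := (norm_nonneg _).trans hHmK
  have hKC : 0 ≤ 2 * K * C := mul_nonneg (by positivity) ((norm_nonneg _).trans hHmOC)
  have hdrift : ‖A tR tL - A 0 0‖
      ≤ 2 * ‖Hm‖ * (tL * ‖HL * O - O * HL‖) + tR * (2 * ‖HR‖ * ‖Hm * O - O * Hm‖) := by
    rw [hA_heisenberg, hA_heisenberg, heisenbergEvolution_zero, heisenbergEvolution_zero,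
      ← mul_sub, norm_mul, norm_I, one_mul]
    refine (hρ.norm_trace_mul_sub_trace_mul_le hρtr _ _).trans ?_
    simpa only [abs_of_nonneg htR, abs_of_nonneg htL] using
      norm_heisenbergEvolution_commutator_sub_le hHR.isSelfAdjoint hHL.isSelfAdjoint Hm O tR tL
  have hHmK : ‖Hm‖ ≤ K := hK ▸ le_max_right _ _
  have hHRK : ‖HR‖ ≤ K := hK ▸ le_max_left _ _
  have hHmOC : ‖Hm * O - O * Hm‖ ≤ C := hC ▸ le_max_left _ _
  have hHLOC : ‖HL * O - O * HL‖ ≤ C := hC ▸ le_max_right _ _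
  have hK0 : 0 ≤ K := (norm_nonneg _).trans hHmK
  have hKC : 0 ≤ 2 * K * C := mul_nonneg (by positivity) ((norm_nonneg _).trans hHmOC)
  have hhalf : ‖A tR tL - A 0 0‖ ≤ ‖A 0 0‖ / 2 :=
    calc ‖A tR tL - A 0 0‖ ≤ 2 * K * (tL * C) + tR * (2 * K * C) := hdrift.trans (by gcongr)
      _ = 2 * K * C * (tR + tL) := by ring
      _ ≤ 2 * K * C * (‖A 0 0‖ / (4 * K * C)) := by gcongr
      _ = ‖A 0 0‖ / 2 * (4 * K * C / (4 * K * C)) := by ring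
      _ ≤ ‖A 0 0‖ / 2 := mul_le_of_le_one_right (by positivity) (div_self_le_one _)
  linarith [norm_sub_norm_le (A 0 0) (A tR tL), norm_sub_rev (A 0 0) (A tR tL)]

theorem quantum_speed_limit_of_gradients (n : ℕ) (HR Hm HL O ρ₀ : Matrix (Fin n) (Fin n) ℂ)
    (hHR : HR.IsHermitian) (hHm : Hm.IsHermitian) (hHL : HL.IsHermitian)
    (hO : O.IsHermitian) (hρ : ρ₀.PosSemidef) (hρtr : ρ₀.trace = 1)
    (A : ℝ → ℝ → ℂ)
    (hA : A = fun (t₁ t₂ : ℝ) =>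
      Complex.I *
        (exp ((-(Complex.I * (t₁ : ℂ))) • HR) * ρ₀ * exp ((Complex.I * (t₁ : ℂ)) • HR) *
          (Hm * (exp ((Complex.I * (t₂ : ℂ)) • HL) * O * exp ((-(Complex.I * (t₂ : ℂ))) • HL))
            - (exp ((Complex.I * (t₂ : ℂ)) • HL) * O *
                exp ((-(Complex.I * (t₂ : ℂ))) • HL)) * Hm)).trace)
    (K C : ℝ) (hK : K = max ‖HR‖ ‖Hm‖) (hC : C = max ‖Hm * O - O * Hm‖ ‖HL * O - O * HL‖)
    (hA0 : A 0 0 ≠ 0) (hKpos : 0 < K) (hCpos : 0 < C) :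
    ∀ tR tL : ℝ, 0 ≤ tR → 0 ≤ tL → tR + tL ≤ ‖A 0 0‖ / (4 * K * C) →
      ‖A tR tL‖ ≥ ‖A 0 0‖ / 2 :=
  quantum_speed_limit_of_gradients_general n HR Hm HL O ρ₀ hHR hHL hρ hρtr A hA K C hK hC
end

section
/- Multicommutator bound: Let H^{(i₁)}, …, H^{(iₙ)} be Hamiltonians, each of the form H^{(j)} = ∑_X h_X^{(j)} over subsets X of a site set Λ, with the local bound ∑_{X : X ∋ a} ‖h_X^{(j)}‖ ≤ J for all sites a and all j, and with each h_X^{(j)} supported on at most k sites. Then for any operator O supported on at most k sites, ‖[H^{(iₙ)}, [H^{(iₙ₋₁)}, …, [H^{(i₁)}, O]…]]‖ ≤ n! · (2kJ)^n · ‖O‖. -/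
/-
If `O` is supported on at most `j * k` sites, the terms `h_X` of the innermost Hamiltonian whose
support misses that of `O` commute with `O`; the remaining ones have total norm at most `j * k * J`,
and each `[h_X, O]` has norm at most `2 ‖h_X‖ ‖O‖` and is supported on at most `(j + 1) * k` sites.
Induction on the number of levels gives the bound `j (j + 1) ⋯ (j + n - 1) (2 k J)ⁿ ‖O‖`,
which for `j = 1` is the claim.
-/

open Matrix
open scoped Matrix.Norms.L2Operator

variable {Λ : Type*} [Fintype Λ] [DecidableEq Λ]

/-- An operator on a system of qubits indexed by `Λ` is supported on the set of sites `X`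
if it acts trivially (as the identity) outside of `X`. -/
def SupportedOn (X : Finset Λ) (M : Matrix (Λ → Fin 2) (Λ → Fin 2) ℂ) : Prop :=
  (∀ f g : Λ → Fin 2, (∃ a ∉ X, f a ≠ g a) → M f g = 0) ∧
  (∀ f g f' g' : Λ → Fin 2, (∀ a ∈ X, f a = f' a) → (∀ a ∈ X, g a = g' a) →
    (∀ a ∉ X, f a = g a) → (∀ a ∉ X, f' a = g' a) → M f g = M f' g')

/-- `H` is a `k`-body Hamiltonian with local interaction strength at most `J`:
it decomposes as a sum of terms `h_X` supported on subsets `X` of at most `k` sites,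
with `∑_{X ∋ a} ‖h_X‖ ≤ J` for every site `a`. -/
def IsLocalHamiltonian (k : ℕ) (J : ℝ) (H : Matrix (Λ → Fin 2) (Λ → Fin 2) ℂ) : Prop :=
  ∃ h : Finset Λ → Matrix (Λ → Fin 2) (Λ → Fin 2) ℂ,
    H = ∑ X : Finset Λ, h X ∧
    (∀ X : Finset Λ, SupportedOn X (h X)) ∧
    (∀ X : Finset Λ, k < X.card → h X = 0) ∧
    (∀ a : Λ, ∑ X ∈ Finset.univ.filter (fun X : Finset Λ => a ∈ X), ‖h X‖ ≤ J)

/-- The nested commutator `[Aₙ, [Aₙ₋₁, …, [A₁, O]…]]` for a list `[Aₙ, …, A₁]`. -/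
def nestedComm {α : Type*} [Ring α] : List α → α → α
  | [], O => O
  | (A :: l), O => A * nestedComm l O - nestedComm l O * A

open Finset

namespace SupportedOn

variable {X Y : Finset Λ} {A B M : Matrix (Λ → Fin 2) (Λ → Fin 2) ℂ}

section

omit [Fintype Λ] [DecidableEq Λ]

lemma apply_eq_zero (hM : SupportedOn X M) {f g : Λ → Fin 2} {a : Λ} (ha : a ∉ X)
    (hfg : f a ≠ g a) : M f g = 0 :=
  hM.1 f g ⟨a, ha, hfg⟩

/- Being supported on `X` amounts to vanishing between configurations that differ off `X`,
together with invariance under flipping spins off `X`, i.e. under adding `d` with `d = 0` on `X`. -/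
lemma apply_add_add (hM : SupportedOn X M) {d : Λ → Fin 2} (hd : ∀ a ∈ X, d a = 0)
    (f g : Λ → Fin 2) : M (f + d) (g + d) = M f g := by
  by_cases hfg : ∀ a ∉ X, f a = g a
  · exact (hM.2 f g (f + d) (g + d) (fun a ha => by simp [hd a ha])
      (fun a ha => by simp [hd a ha]) hfg (fun a ha => by simp [hfg a ha])).symm
  · push Not at hfg
    obtain ⟨a, ha, hne⟩ := hfg
    rw [hM.apply_eq_zero ha hne, hM.apply_eq_zero ha (by simpa using hne)]

lemma of_apply_add_add (hzero : ∀ f g a, a ∉ X → f a ≠ g a → M f g = 0)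
    (hinv : ∀ d : Λ → Fin 2, (∀ a ∈ X, d a = 0) → ∀ f g, M (f + d) (g + d) = M f g) :
    SupportedOn X M := by
  refine ⟨fun f g ⟨a, ha, hne⟩ => hzero f g a ha hne, fun f g f' g' h1 h2 h3 h4 => ?_⟩
  have hg' : g' = g + (f' - f) := by
    funext a
    by_cases ha : a ∈ X
    · simp [h1 a ha, h2 a ha]
    · simp [h3 a ha, h4 a ha]
  rw [hg', ← hinv (f' - f) (fun a ha => by simp [h1 a ha]) f g, add_sub_cancel]

lemma sub (hA : SupportedOn X A) (hB : SupportedOn X B) : SupportedOn X (A - B) :=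
  of_apply_add_add
    (fun _ _ _ ha hfg => by simp [hA.apply_eq_zero ha hfg, hB.apply_eq_zero ha hfg])
    (fun _ hd f g => by simp [hA.apply_add_add hd, hB.apply_add_add hd])

lemma mono (hM : SupportedOn X M) (hXY : X ⊆ Y) : SupportedOn Y M :=
  of_apply_add_add (fun _ _ _ ha hfg => hM.apply_eq_zero (fun h => ha (hXY h)) hfg)
    (fun _ hd => hM.apply_add_add fun a ha => hd a (hXY ha))

/- Both sides vanish unless `h = f` off `X` and `h = g` off `Y`; then, `X` and `Y` being disjoint,
`f - h` vanishes on `Y` and `g - h` on `X`, so the flip invariance applies. -/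
lemma apply_mul_apply_eq (hA : SupportedOn X A) (hB : SupportedOn Y B) (hXY : Disjoint X Y)
    (f g h : Λ → Fin 2) : A f h * B h g = B f (f + g - h) * A (f + g - h) g := by
  by_cases hfh : ∀ a ∉ X, f a = h a
  · have hBeq : B h g = B f (f + g - h) := by
      have := hB.apply_add_add (d := f - h)
        (fun a ha => by simp [hfh a (disjoint_right.1 hXY ha)]) h g
      rwa [add_sub_cancel, add_sub_assoc', add_comm g, eq_comm] at this
    by_cases hhg : ∀ a ∉ Y, h a = g a
    · have hAeq : A f h = A (f + g - h) g := by
        have := hA.apply_add_add (d := g - h)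
          (fun a ha => by simp [hhg a (disjoint_left.1 hXY ha)]) f h
        rwa [add_sub_cancel, ← add_sub_assoc, eq_comm] at this
      rw [hAeq, hBeq, mul_comm]
    · push Not at hhg
      obtain ⟨a, ha, hne⟩ := hhg
      rw [← hBeq, hB.apply_eq_zero ha hne, mul_zero, zero_mul]
  · push Not at hfh
    obtain ⟨a, ha, hne⟩ := hfh
    have hne' : (f + g - h) a ≠ g a := fun e => hne <| by
      simpa only [Pi.add_apply, Pi.sub_apply, sub_eq_iff_eq_add, add_comm (g a), add_left_inj]
        using e
    rw [hA.apply_eq_zero ha hne, hA.apply_eq_zero ha hne', zero_mul, mul_zero]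

end

lemma mul (hA : SupportedOn X A) (hB : SupportedOn Y B) : SupportedOn (X ∪ Y) (A * B) := by
  refine of_apply_add_add (fun f g a ha hfg => ?_) (fun d hd f g => ?_)
  · rw [mem_union, not_or] at ha
    rw [Matrix.mul_apply]
    refine sum_eq_zero fun h _ => ?_
    by_cases hfh : f a = h a
    · rw [hB.apply_eq_zero ha.2 (hfh ▸ hfg), mul_zero]
    · rw [hA.apply_eq_zero ha.1 hfh, zero_mul]
  · simp only [Matrix.mul_apply]
    rw [← Equiv.sum_comp (Equiv.addRight d)]
    refine sum_congr rfl fun h _ => ?_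
    rw [Equiv.coe_addRight, hA.apply_add_add fun a ha => hd a (mem_union_left _ ha),
      hB.apply_add_add fun a ha => hd a (mem_union_right _ ha)]

lemma commutator (hA : SupportedOn X A) (hB : SupportedOn Y B) :
    SupportedOn (X ∪ Y) (A * B - B * A) :=
  (hA.mul hB).sub ((hB.mul hA).mono (union_comm Y X).subset)

lemma commute_of_disjoint (hA : SupportedOn X A) (hB : SupportedOn Y B) (hXY : Disjoint X Y) :
    Commute A B := by
  ext f g
  simp only [Matrix.mul_apply]
  calc ∑ h, A f h * B h g = ∑ h, B f (f + g - h) * A (f + g - h) g :=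
        sum_congr rfl fun h _ => hA.apply_mul_apply_eq hB hXY f g h
    _ = ∑ h, B f h * A h g := Equiv.sum_comp (Equiv.subLeft (f + g)) fun h => B f h * A h g

end SupportedOn

section NestedComm

variable {R : Type*} [Ring R]

lemma nestedComm_append_singleton (l : List R) (A O : R) :
    nestedComm (l ++ [A]) O = nestedComm l (A * O - O * A) := by
  induction l with
  | nil => rfl
  | cons B l ih => simp [nestedComm, ih]

lemma nestedComm_zero (l : List R) : nestedComm l (0 : R) = 0 := by
  induction l with
  | nil => rfl
  | cons B l ih => simp [nestedComm, ih]

lemma nestedComm_sum {ι : Type*} (l : List R) (s : Finset ι) (f : ι → R) :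
    nestedComm l (∑ i ∈ s, f i) = ∑ i ∈ s, nestedComm l (f i) := by
  induction l with
  | nil => rfl
  | cons B l ih => simp [nestedComm, ih, mul_sum, sum_mul]

end NestedComm

lemma norm_mul_sub_mul_le_s13 {R : Type*} [NonUnitalSeminormedRing R] (A B : R) :
    ‖A * B - B * A‖ ≤ 2 * ‖A‖ * ‖B‖ :=
  calc ‖A * B - B * A‖ ≤ ‖A * B‖ + ‖B * A‖ := norm_sub_le _ _
    _ ≤ ‖A‖ * ‖B‖ + ‖B‖ * ‖A‖ := add_le_add (norm_mul_le _ _) (norm_mul_le _ _)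
    _ = 2 * ‖A‖ * ‖B‖ := by ring

lemma sum_filter_not_disjoint_le {α : Type*} [DecidableEq α] (𝒳 : Finset (Finset α))
    (S : Finset α) {w : Finset α → ℝ} (hw : ∀ X, 0 ≤ w X) :
    ∑ X ∈ 𝒳 with ¬Disjoint X S, w X ≤ ∑ a ∈ S, ∑ X ∈ 𝒳 with a ∈ X, w X := by
  have hmeet : ∀ X, ¬Disjoint X S → w X ≤ ∑ a ∈ S with a ∈ X, w X := fun X hX => by
    obtain ⟨a, haX, haS⟩ := not_disjoint_iff.1 hX
    exact single_le_sum (f := fun _ => w X) (fun _ _ => hw X) (mem_filter.2 ⟨haS, haX⟩)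
  calc ∑ X ∈ 𝒳 with ¬Disjoint X S, w X
        ≤ ∑ X ∈ 𝒳 with ¬Disjoint X S, ∑ a ∈ S with a ∈ X, w X :=
          sum_le_sum fun X hX => hmeet X (mem_filter.1 hX).2
    _ ≤ ∑ X ∈ 𝒳, ∑ a ∈ S with a ∈ X, w X :=
          sum_le_sum_of_subset_of_nonneg (filter_subset _ _) fun X _ _ => sum_nonneg fun _ _ => hw X
    _ = ∑ a ∈ S, ∑ X ∈ 𝒳 with a ∈ X, w X := sum_comm' fun X a => by simp only [mem_filter]; tauto

theorem norm_nestedComm_commutator_le {k m : ℕ} {J C : ℝ} (hJ : 0 ≤ J) (hC : 0 ≤ C)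
    {l : List (Matrix (Λ → Fin 2) (Λ → Fin 2) ℂ)}
    (hl : ∀ O X, #X ≤ m + k → SupportedOn X O → ‖nestedComm l O‖ ≤ C * ‖O‖)
    {A O : Matrix (Λ → Fin 2) (Λ → Fin 2) ℂ} (hA : IsLocalHamiltonian k J A)
    {X₀ : Finset Λ} (hX₀ : #X₀ ≤ m) (hO : SupportedOn X₀ O) :
    ‖nestedComm l (A * O - O * A)‖ ≤ 2 * m * J * C * ‖O‖ := by
  obtain ⟨h, rfl, hsupp, hcard, hloc⟩ := hA
  have hterm : ∀ X, ‖nestedComm l (h X * O - O * h X)‖ ≤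
      if ¬Disjoint X X₀ then 2 * C * ‖O‖ * ‖h X‖ else 0 := by
    intro X
    by_cases hX : Disjoint X X₀
    · rw [if_neg (not_not.2 hX), ((hsupp X).commute_of_disjoint hO hX).eq, sub_self,
        nestedComm_zero, norm_zero]
    · rw [if_pos hX]
      rcases le_or_gt #X k with hXk | hXk
      · calc ‖nestedComm l (h X * O - O * h X)‖ ≤ C * ‖h X * O - O * h X‖ :=
                hl _ _ (card_union_le X X₀ |>.trans (by omega)) ((hsupp X).commutator hO)
          _ ≤ C * (2 * ‖h X‖ * ‖O‖) := by gcongr; exact norm_mul_sub_mul_le_s13 _ _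
          _ = 2 * C * ‖O‖ * ‖h X‖ := by ring
      · simp [hcard X hXk, nestedComm_zero]
  have hmeet : ∑ X with ¬Disjoint X X₀, ‖h X‖ ≤ m * J :=
    calc ∑ X with ¬Disjoint X X₀, ‖h X‖ ≤ ∑ a ∈ X₀, ∑ X with a ∈ X, ‖h X‖ :=
          sum_filter_not_disjoint_le _ _ fun X => norm_nonneg (h X)
      _ ≤ ∑ a ∈ X₀, J := sum_le_sum fun a _ => hloc a
      _ = #X₀ * J := by rw [sum_const, nsmul_eq_mul]
      _ ≤ m * J := by gcongr
  calc ‖nestedComm l ((∑ X, h X) * O - O * ∑ X, h X)‖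
        = ‖∑ X, nestedComm l (h X * O - O * h X)‖ := by
          rw [← nestedComm_sum, sum_mul, mul_sum, sum_sub_distrib]
    _ ≤ ∑ X, if ¬Disjoint X X₀ then 2 * C * ‖O‖ * ‖h X‖ else 0 :=
          (norm_sum_le _ _).trans (sum_le_sum fun X _ => hterm X)
    _ = 2 * C * ‖O‖ * ∑ X with ¬Disjoint X X₀, ‖h X‖ := by rw [← sum_filter, mul_sum]
    _ ≤ 2 * C * ‖O‖ * (m * J) := by gcongr
    _ = 2 * m * J * C * ‖O‖ := by ring

theorem norm_nestedComm_le_ascFactorial {k : ℕ} {J : ℝ} (hJ : 0 ≤ J)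
    (Hs : List (Matrix (Λ → Fin 2) (Λ → Fin 2) ℂ)) (hHs : ∀ H ∈ Hs, IsLocalHamiltonian k J H)
    (j : ℕ) {O : Matrix (Λ → Fin 2) (Λ → Fin 2) ℂ} {X₀ : Finset Λ} (hX₀ : #X₀ ≤ j * k)
    (hO : SupportedOn X₀ O) :
    ‖nestedComm Hs O‖ ≤ j.ascFactorial Hs.length * (2 * k * J) ^ Hs.length * ‖O‖ := by
  induction Hs using List.reverseRecOn generalizing j O X₀ with
  | nil => simp [nestedComm]
  | append_singleton l A ih =>
    rw [nestedComm_append_singleton]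
    refine (norm_nestedComm_commutator_le hJ (by positivity)
      (fun O' X hX hO' => ih (fun H hH => hHs H (List.mem_append_left _ hH)) (j + 1)
        (hX.trans_eq (by ring)) hO')
      (hHs A (by simp)) hX₀ hO).trans_eq ?_
    rw [List.length_append, List.length_singleton, Nat.ascFactorial_succ,
      ← Nat.succ_ascFactorial]
    push_cast
    ring

theorem norm_nestedComm_le_general (k : ℕ) (J : ℝ) (hJ : 0 < J)
    (Hs : List (Matrix (Λ → Fin 2) (Λ → Fin 2) ℂ))
    (hHs : ∀ H ∈ Hs, IsLocalHamiltonian k J H)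
    (O : Matrix (Λ → Fin 2) (Λ → Fin 2) ℂ) (X₀ : Finset Λ) (hX₀ : X₀.card ≤ k)
    (hO : SupportedOn X₀ O) :
    ‖nestedComm Hs O‖ ≤
      (Nat.factorial Hs.length : ℝ) * (2 * k * J) ^ Hs.length * ‖O‖ := by
  simpa [Nat.one_ascFactorial] using
    norm_nestedComm_le_ascFactorial hJ.le Hs hHs 1 (by simpa using hX₀) hO

theorem norm_nestedComm_le (k : ℕ) (J : ℝ) (hk : 0 < k) (hJ : 0 < J)
    (Hs : List (Matrix (Λ → Fin 2) (Λ → Fin 2) ℂ))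
    (hHs : ∀ H ∈ Hs, IsLocalHamiltonian k J H)
    (O : Matrix (Λ → Fin 2) (Λ → Fin 2) ℂ) (X₀ : Finset Λ) (hX₀ : X₀.card ≤ k)
    (hO : SupportedOn X₀ O) :
    ‖nestedComm Hs O‖ ≤
      (Nat.factorial Hs.length : ℝ) * (2 * k * J) ^ Hs.length * ‖O‖ :=
  norm_nestedComm_le_general k J hJ Hs hHs O X₀ hX₀ hO
end
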